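/- Let X ∈ ℝ^{m×n₁}, Y ∈ ℝ^{m×n₂}, U ∈ ℝ^{m×r} with UᵀU = I_r, W ∈ ℝ^{m×r′} with WᵀW = I_{r′} and WᵀU = 0, C ∈ ℝ^{r×n₁}, and τ > 0, d ≥ 1. Define P = UᵀY, E = Y − U P, K = WᵀE, X̃ = [X, Y], Ũ = [U, W], C̃ = [[C, P], [0, K]]. If ‖X − U C‖_F ≤ (τ/√d)‖X‖_F and ‖E − W K‖_F ≤ (τ/√d)‖Y‖_F, then ‖X̃ − Ũ C̃‖_F ≤ (τ/√d)‖X̃‖_F. -/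

import Mathlib

/-! The residual of the expanded approximation splits column-blockwise as
`[X̃ - ŨC̃] = [X - UC, (Y - UP) - WK] = [X - UC, E - WK]`, and the squared Frobenius norm is
additive over column blocks, so the two squared per-block bounds add up to the squared bound
for `X̃`. -/

open Matrix BigOperators

/-- Squared Frobenius norm of a real matrix. -/
noncomputable def frobSq {m n : Type*} [Fintype m] [Fintype n] (M : Matrix m n ℝ) : ℝ :=
  ∑ i, ∑ j, (M i j) ^ 2

/-- Frobenius norm of a real matrix. -/
noncomputable def frob {m n : Type*} [Fintype m] [Fintype n] (M : Matrix m n ℝ) : ℝ :=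
  Real.sqrt (frobSq M)

namespace Matrix

lemma fromCols_sub_fromCols {R m n₁ n₂ : Type*} [Sub R]
    (A₁ B₁ : Matrix m n₁ R) (A₂ B₂ : Matrix m n₂ R) :
    fromCols A₁ A₂ - fromCols B₁ B₂ = fromCols (A₁ - B₁) (A₂ - B₂) := by
  ext i (j | j) <;> rfl

lemma fromCols_sub_fromCols_mul_fromBlocks_zero {R m r₁ r₂ n₁ n₂ : Type*}
    [Ring R] [Fintype r₁] [Fintype r₂]
    (X : Matrix m n₁ R) (Y : Matrix m n₂ R) (U : Matrix m r₁ R) (W : Matrix m r₂ R)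
    (C : Matrix r₁ n₁ R) (P : Matrix r₁ n₂ R) (K : Matrix r₂ n₂ R) :
    fromCols X Y - fromCols U W * fromBlocks C P 0 K =
      fromCols (X - U * C) (Y - U * P - W * K) := by
  rw [fromCols_mul_fromBlocks, Matrix.mul_zero, add_zero, fromCols_sub_fromCols, sub_sub]

end Matrix

section Frobenius

variable {m n n₁ n₂ : Type*} [Fintype m] [Fintype n] [Fintype n₁] [Fintype n₂]

lemma frobSq_nonneg (M : Matrix m n ℝ) : 0 ≤ frobSq M :=
  Finset.sum_nonneg fun _ _ => Finset.sum_nonneg fun _ _ => sq_nonneg _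

lemma frob_nonneg (M : Matrix m n ℝ) : 0 ≤ frob M := Real.sqrt_nonneg _

lemma frob_sq (M : Matrix m n ℝ) : frob M ^ 2 = frobSq M := Real.sq_sqrt (frobSq_nonneg M)

lemma frobSq_fromCols (A : Matrix m n₁ ℝ) (B : Matrix m n₂ ℝ) :
    frobSq (fromCols A B) = frobSq A + frobSq B := by
  simp only [frobSq, Fintype.sum_sum_type, fromCols_apply_inl, fromCols_apply_inr,
    Finset.sum_add_distrib]

lemma frob_fromCols_le_mul_frob_fromCols {A X : Matrix m n₁ ℝ} {B Y : Matrix m n₂ ℝ} {c : ℝ}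
    (hc : 0 ≤ c) (hA : frob A ≤ c * frob X) (hB : frob B ≤ c * frob Y) :
    frob (fromCols A B) ≤ c * frob (fromCols X Y) := by
  have hA2 : frobSq A ≤ c ^ 2 * frobSq X := by
    rw [← frob_sq, ← frob_sq, ← mul_pow]
    exact pow_le_pow_left₀ (frob_nonneg A) hA 2
  have hB2 : frobSq B ≤ c ^ 2 * frobSq Y := by
    rw [← frob_sq, ← frob_sq, ← mul_pow]
    exact pow_le_pow_left₀ (frob_nonneg B) hB 2
  refine Real.sqrt_le_iff.mpr ⟨mul_nonneg hc (frob_nonneg _), ?_⟩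
  rw [mul_pow, frob_sq, frobSq_fromCols, frobSq_fromCols]
  linarith

end Frobenius

theorem nonstreaming_mode_error_bound_maintained_general
    {m n1 n2 r r' : ℕ}
    (X : Matrix (Fin m) (Fin n1) ℝ)
    (Y : Matrix (Fin m) (Fin n2) ℝ)
    (U : Matrix (Fin m) (Fin r) ℝ)
    (W : Matrix (Fin m) (Fin r') ℝ)
    (C : Matrix (Fin r) (Fin n1) ℝ)
    (τ : ℝ) (hτ : 0 < τ)
    (d : ℕ)
    (P : Matrix (Fin r) (Fin n2) ℝ)
    (E : Matrix (Fin m) (Fin n2) ℝ) (hE : E = Y - U * P)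
    (K : Matrix (Fin r') (Fin n2) ℝ)
    (hX : frob (X - U * C) ≤ τ / Real.sqrt d * frob X)
    (hY : frob (E - W * K) ≤ τ / Real.sqrt d * frob Y) :
    frob (Matrix.fromCols X Y - Matrix.fromCols U W * Matrix.fromBlocks C P 0 K) ≤
      τ / Real.sqrt d * frob (Matrix.fromCols X Y) := by
  rw [fromCols_sub_fromCols_mul_fromBlocks_zero, ← hE]
  exact frob_fromCols_le_mul_frob_fromCols (by positivity) hX hY

/-- Induction step for non-streaming modes in the streaming ST-HOSVD
algorithm (Section 4.2 of the paper): the sequential per-mode error bound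
`(τ/√d)‖·‖_F` is maintained after expanding the factor matrix by `W`. -/
theorem nonstreaming_mode_error_bound_maintained
    {m n1 n2 r r' : ℕ}
    (X : Matrix (Fin m) (Fin n1) ℝ)
    (Y : Matrix (Fin m) (Fin n2) ℝ)
    (U : Matrix (Fin m) (Fin r) ℝ)
    (W : Matrix (Fin m) (Fin r') ℝ)
    (C : Matrix (Fin r) (Fin n1) ℝ)
    (τ : ℝ) (hτ : 0 < τ)
    (d : ℕ) (hd : 1 ≤ d)
    (hU : Uᵀ * U = 1)
    (hW : Wᵀ * W = 1)
    (hWU : Wᵀ * U = 0)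
    (P : Matrix (Fin r) (Fin n2) ℝ) (hP : P = Uᵀ * Y)
    (E : Matrix (Fin m) (Fin n2) ℝ) (hE : E = Y - U * P)
    (K : Matrix (Fin r') (Fin n2) ℝ) (hK : K = Wᵀ * E)
    (hX : frob (X - U * C) ≤ τ / Real.sqrt d * frob X)
    (hY : frob (E - W * K) ≤ τ / Real.sqrt d * frob Y) :
    frob (Matrix.fromCols X Y - Matrix.fromCols U W * Matrix.fromBlocks C P 0 K) ≤
      τ / Real.sqrt d * frob (Matrix.fromCols X Y) :=
  nonstreaming_mode_error_bound_maintained_general X Y U W C τ hτ d P E hE K hX hY
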